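/- arXiv:2312.15473 — 3 statements merged into one kernel-verified Lean document; each statement's English description precedes it below -/
import Mathlib

section
/- The 7-dimensional step-2 stratified Lie algebra 𝔤_{7,5,2} of rank 5, with only nontrivial brackets [X₁,X₂]=[X₃,X₄]=T₁ and [X₁,X₅]=[X₂,X₃]=T₂, is plentiful: every 4-dimensional subspace V of V₁ = span{X₁,…,X₅} satisfies [V,V] = V₂ = span{T₁,T₂}. -/
/-!
If the brackets `[V, V]` did not span `V₂`, some nonzero functional `f` on `V₂` would kill them,
making `V` isotropic for the alternating form `f ∘ [·,·]` on `V₁`. For `f = (a, b) ≠ 0` the radical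
of this form is at most the line through `(0, ab, 0, b², -a²)`, and a subspace isotropic for a form
on a 5-dimensional space with radical of dimension `≤ 1` has dimension at most `(5 + 1) / 2 = 3`.
-/

/-- The bracket of the stratified Lie algebra `𝔤_{7,5,2}`, expressed in the
orthonormal basis `X₁,…,X₅` of `V₁` and `T₁,T₂` of `V₂`:
`[X₁,X₂] = [X₃,X₄] = T₁` and `[X₁,X₅] = [X₂,X₃] = T₂`. -/
noncomputable def br752 (x y : Fin 5 → ℝ) : Fin 2 → ℝ :=
  ![x 0 * y 1 - x 1 * y 0 + x 2 * y 3 - x 3 * y 2,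
    x 0 * y 4 - x 4 * y 0 + x 1 * y 2 - x 2 * y 1]

open Module Submodule

theorem LinearMap.BilinForm.two_mul_finrank_le_of_isotropic {K V : Type*} [Field K]
    [AddCommGroup V] [Module K V] [FiniteDimensional K V] {B : LinearMap.BilinForm K V}
    {W : Submodule K V} (hW : ∀ x ∈ W, ∀ y ∈ W, B x y = 0) :
    2 * finrank K W ≤ finrank K V + finrank K (LinearMap.ker B) := by
  have hWW : W ≤ B.orthogonal W := fun y hy ↦ mem_orthogonal_iff.mpr fun x hx ↦ hW x hx y hy
  have := finrank_add_finrank_orthogonal' (B := B) W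
  have := finrank_mono hWW
  have := finrank_mono (inf_le_right : W ⊓ LinearMap.ker B ≤ LinearMap.ker B)
  omega

theorem Module.Dual.apply_fin_two {R : Type*} [CommSemiring R] (f : Dual R (Fin 2 → R))
    (z : Fin 2 → R) : f z = f (Pi.single 0 1) * z 0 + f (Pi.single 1 1) * z 1 := by
  conv_lhs => rw [show z = z 0 • Pi.single 0 1 + z 1 • Pi.single 1 1 by ext i; fin_cases i <;> simp]
  simp [mul_comm]

noncomputable def br752Bilin : (Fin 5 → ℝ) →ₗ[ℝ] (Fin 5 → ℝ) →ₗ[ℝ] (Fin 2 → ℝ) :=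
  LinearMap.mk₂ ℝ br752
    (fun _ _ _ ↦ by ext i; fin_cases i <;> simp [br752] <;> ring)
    (fun _ _ _ ↦ by ext i; fin_cases i <;> simp [br752] <;> ring)
    (fun _ _ _ ↦ by ext i; fin_cases i <;> simp [br752] <;> ring)
    (fun _ _ _ ↦ by ext i; fin_cases i <;> simp [br752] <;> ring)

lemma mem_span_of_forall_comb_br752_eq_zero {a b : ℝ} (hab : a ≠ 0 ∨ b ≠ 0) {y : Fin 5 → ℝ}
    (hy : ∀ x, a * br752 y x 0 + b * br752 y x 1 = 0) :
    y ∈ span ℝ {![0, a * b, 0, b ^ 2, -a ^ 2]} := by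
  have e := fun i : Fin 5 ↦ hy (Pi.single i 1)
  simp [Fin.forall_fin_succ, br752, Pi.single_apply, -mul_eq_zero] at e
  obtain ⟨e0, e1, e2, e3, e4⟩ := e
  have hs : a ^ 4 + a ^ 2 * b ^ 2 + b ^ 4 ≠ 0 := by rcases hab with h | h <;> positivity
  have key : (a ^ 4 + a ^ 2 * b ^ 2 + b ^ 4) • y
      = (a * b * y 1 + b ^ 2 * y 3 - a ^ 2 * y 4) • ![0, a * b, 0, b ^ 2, -a ^ 2] := by
    ext i
    fin_cases i <;> simp [-mul_eq_zero]
    · linear_combination a ^ 3 * e1 + a ^ 2 * b * e3 + (a ^ 2 * b + b ^ 3) * e4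
    · linear_combination -a ^ 3 * e0 + b ^ 3 * e2
    · linear_combination (a ^ 3 + a * b ^ 2) * e3 - b ^ 3 * e1 + a * b ^ 2 * e4
    · linear_combination -(a ^ 3 + a * b ^ 2) * e2 - a ^ 2 * b * e0
    · linear_combination -(a ^ 2 * b + b ^ 3) * e0 - a * b ^ 2 * e2
  rw [← smul_mem_iff _ hs, key]
  exact smul_mem _ _ (mem_span_singleton_self _)

lemma finrank_ker_br752Bilin_compr₂_le_one {f : Dual ℝ (Fin 2 → ℝ)} (hf : f ≠ 0) :
    finrank ℝ (LinearMap.ker (br752Bilin.compr₂ f)) ≤ 1 := by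
  set a := f (Pi.single 0 1)
  set b := f (Pi.single 1 1)
  have hab : a ≠ 0 ∨ b ≠ 0 := by
    by_contra! h
    exact hf (LinearMap.ext fun z ↦ by simp [f.apply_fin_two z, a, b, h])
  have hker : LinearMap.ker (br752Bilin.compr₂ f) ≤ span ℝ {![0, a * b, 0, b ^ 2, -a ^ 2]} :=
    fun y hy ↦ mem_span_of_forall_comb_br752_eq_zero hab fun x ↦
      (f.apply_fin_two _).symm.trans (LinearMap.congr_fun hy x)
  exact (finrank_mono hker).trans ((finrank_span_le_card _).trans (by simp))

/-- The Lie algebra `𝔤_{7,5,2}` is plentiful: every 4-dimensional subspace `V`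
of `V₁ = ℝ⁵` satisfies `[V,V] = V₂ = ℝ²`. -/
theorem stmt_8 (V : Submodule ℝ (Fin 5 → ℝ)) (hV : Module.finrank ℝ V = 4) :
    Submodule.span ℝ {z | ∃ x ∈ V, ∃ y ∈ V, br752 x y = z}
      = (⊤ : Submodule ℝ (Fin 2 → ℝ)) := by
  by_contra hne
  obtain ⟨f, hf, hle⟩ := exists_le_ker_of_lt_top _ (lt_top_iff_ne_top.mpr hne)
  have hiso : ∀ x ∈ V, ∀ y ∈ V, br752Bilin.compr₂ f x y = 0 := fun x hx y hy ↦
    hle (subset_span ⟨x, hx, y, hy, rfl⟩)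
  have hdim := LinearMap.BilinForm.two_mul_finrank_le_of_isotropic hiso
  rw [hV, finrank_fin_fun] at hdim
  have := finrank_ker_br752Bilin_compr₂_le_one hf
  omega
end

section
/- For every α > 0, p ∈ 𝔾 and s₀ ∈ ℝ, the union over s < s₀ of the positive cones C⁺(p⋆se₁, α) is all of 𝔾. -/
open Matrix

/-- `⟨Bx,ξ⟩ ∈ ℝ^{m₂}`. -/
noncomputable def bvec {m₁ m₂ : ℕ} (B : Fin m₂ → Matrix (Fin m₁) (Fin m₁) ℝ)
    (x ξ : Fin m₁ → ℝ) : Fin m₂ → ℝ :=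
  fun j => (B j).mulVec x ⬝ᵥ ξ

/-- The step-2 group law `(x,t) ⋆ (ξ,τ) = (x + ξ, t + τ + ½⟨Bx,ξ⟩)`. -/
noncomputable def gmul {m₁ m₂ : ℕ} (B : Fin m₂ → Matrix (Fin m₁) (Fin m₁) ℝ)
    (p q : (Fin m₁ → ℝ) × (Fin m₂ → ℝ)) : (Fin m₁ → ℝ) × (Fin m₂ → ℝ) :=
  (p.1 + q.1, p.2 + q.2 + (1 / 2 : ℝ) • bvec B p.1 q.1)

/-- Euclidean norm on `ℝ^n`. -/
noncomputable def eunorm {n : ℕ} (x : Fin n → ℝ) : ℝ :=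
  Real.sqrt (∑ i, x i ^ 2)

/-- Component of `x` along the horizontal direction `e₁`: `x^∥ = x₁e₁`. -/
noncomputable def xpar {m : ℕ} (x : Fin (m + 1) → ℝ) : Fin (m + 1) → ℝ :=
  Pi.single 0 (x 0)

/-- Orthogonal component `x^⊥ = x - x^∥`. -/
noncomputable def xperp {m : ℕ} (x : Fin (m + 1) → ℝ) : Fin (m + 1) → ℝ :=
  x - xpar x

/-- The positive open cone `C⁺(0,α)` with vertex `0` and aperture `α`:
`max{|x^⊥|, ε₂|t − ½⟨Bx^⊥, x^∥⟩|^{1/2}} < α|x₁|` with `x₁ > 0`. -/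
noncomputable def posCone {m m₂ : ℕ}
    (B : Fin m₂ → Matrix (Fin (m + 1)) (Fin (m + 1)) ℝ) (ε₂ α : ℝ) :
    Set ((Fin (m + 1) → ℝ) × (Fin m₂ → ℝ)) :=
  {p | max (eunorm (xperp p.1))
        (ε₂ * Real.sqrt (eunorm (p.2 - (1 / 2 : ℝ) • bvec B (xperp p.1) (xpar p.1))))
      < α * |p.1 0| ∧ 0 < p.1 0}

/-
Left translation by `p` is onto, so every `q` is `p ⋆ r`, and since `⟨Bx, x⟩ = 0` for skew `B`,
`(s e₁)⁻¹ = -s e₁` gives `q = (p ⋆ s e₁) ⋆ ((-s e₁) ⋆ r)`. It remains to see that `(σ e₁) ⋆ r`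
lies in `C⁺(0,α)` for all large `σ`: its first coordinate is `σ + r₁`, its `x^⊥` is that of `r`,
and its corrected vertical part `t − ½⟨Bx^⊥, x₁e₁⟩` is affine in `σ`, so the cone conditions
compare a constant and the square root of an affine function with a linear function of `σ`.
-/

open Filter

section GroupLaw

variable {m₁ m₂ : ℕ} (B : Fin m₂ → Matrix (Fin m₁) (Fin m₁) ℝ)

lemma bvec_add_left (x y ξ : Fin m₁ → ℝ) : bvec B (x + y) ξ = bvec B x ξ + bvec B y ξ := by
  funext j; simp [bvec, Matrix.mulVec_add, add_dotProduct]

lemma bvec_add_right (x ξ η : Fin m₁ → ℝ) : bvec B x (ξ + η) = bvec B x ξ + bvec B x η := by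
  funext j; simp [bvec, dotProduct_add]

lemma bvec_neg_right (x ξ : Fin m₁ → ℝ) : bvec B x (-ξ) = -bvec B x ξ := by
  funext j; simp [bvec]

lemma bvec_smul_left (s : ℝ) (x ξ : Fin m₁ → ℝ) : bvec B (s • x) ξ = s • bvec B x ξ := by
  funext j; simp [bvec, Matrix.mulVec_smul, smul_dotProduct]

lemma bvec_smul_right (s : ℝ) (x ξ : Fin m₁ → ℝ) : bvec B x (s • ξ) = s • bvec B x ξ := by
  funext j; simp [bvec, dotProduct_smul]

lemma bvec_self (hB : ∀ j, (B j)ᵀ = -B j) (x : Fin m₁ → ℝ) : bvec B x x = 0 := by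
  funext j
  have h : (B j).mulVec x ⬝ᵥ x = -((B j).mulVec x ⬝ᵥ x) := by
    calc (B j).mulVec x ⬝ᵥ x = ((B j)ᵀ).mulVec x ⬝ᵥ x := by
          rw [dotProduct_comm, dotProduct_mulVec, mulVec_transpose]
      _ = -((B j).mulVec x ⬝ᵥ x) := by rw [hB j, Matrix.neg_mulVec, neg_dotProduct]
  simp only [bvec, Pi.zero_apply]
  linarith

lemma gmul_assoc (p q r : (Fin m₁ → ℝ) × (Fin m₂ → ℝ)) :
    gmul B (gmul B p q) r = gmul B p (gmul B q r) := by
  simp only [gmul, bvec_add_left, bvec_add_right, Prod.mk.injEq]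
  constructor
  · abel
  · module

lemma gmul_zero_left (r : (Fin m₁ → ℝ) × (Fin m₂ → ℝ)) : gmul B 0 r = r := by
  ext <;> simp [gmul, bvec]

lemma gmul_neg_self (hB : ∀ j, (B j)ᵀ = -B j) (x : Fin m₁ → ℝ) :
    gmul B (x, 0) (-x, 0) = 0 := by
  simp [gmul, bvec_neg_right, bvec_self B hB]

lemma exists_gmul_eq (p q : (Fin m₁ → ℝ) × (Fin m₂ → ℝ)) : ∃ r, gmul B p r = q :=
  ⟨(q.1 - p.1, q.2 - p.2 - (1 / 2 : ℝ) • bvec B p.1 (q.1 - p.1)),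
    Prod.ext (by simp [gmul]) (by simp only [gmul]; abel)⟩

end GroupLaw

lemma eunorm_add_smul_le {n : ℕ} (x y : Fin n → ℝ) (s : ℝ) :
    eunorm (x + s • y) ≤ eunorm x + |s| * eunorm y := by
  have h (z : Fin n → ℝ) : eunorm z = ‖WithLp.toLp 2 z‖ := by
    simp [EuclideanSpace.norm_eq, eunorm]
  simpa only [h, WithLp.toLp_add, WithLp.toLp_smul, norm_smul, Real.norm_eq_abs]
    using norm_add_le (WithLp.toLp 2 x) (s • WithLp.toLp 2 y)

lemma eventually_mul_sqrt_lt (c V W a : ℝ) {α : ℝ} (hα : 0 < α) :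
    ∀ᶠ s in atTop, ∀ x ≤ V + s * W, c * √x < α * (s + a) := by
  set K := c ^ 2 * (|V - a * W| + |W|)
  filter_upwards [eventually_ge_atTop (1 - a), eventually_gt_atTop (K / α ^ 2 - a)]
    with s hs₁ hsK x hx
  set t := s + a
  have ht : 1 ≤ t := by linarith
  have hKt : K < α ^ 2 * t := by
    rw [← div_lt_iff₀' (by positivity)]
    linarith
  have hlin : x ≤ t * (|V - a * W| + |W|) := by
    have : V + s * W = (V - a * W) + t * W := by ring
    nlinarith [le_abs_self (V - a * W), le_abs_self W, abs_nonneg (V - a * W), abs_nonneg W]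
  calc c * √x ≤ |c| * √x := mul_le_mul_of_nonneg_right (le_abs_self c) (Real.sqrt_nonneg _)
    _ = √(c ^ 2 * x) := by rw [Real.sqrt_mul (sq_nonneg c), Real.sqrt_sq_eq_abs]
    _ < α * t := by
        rw [Real.sqrt_lt' (by positivity)]
        calc c ^ 2 * x ≤ t * K := by
              simpa only [K, mul_left_comm] using mul_le_mul_of_nonneg_left hlin (sq_nonneg c)
          _ < t * (α ^ 2 * t) := mul_lt_mul_of_pos_left hKt (by positivity)
          _ = (α * t) ^ 2 := by ring

section Cone

variable {m m₂ : ℕ} (B : Fin m₂ → Matrix (Fin (m + 1)) (Fin (m + 1)) ℝ)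

lemma xperp_single_add (s : ℝ) (x : Fin (m + 1) → ℝ) :
    xperp (Pi.single 0 s + x) = xperp x := by
  funext i
  rcases eq_or_ne i 0 with rfl | h
  · simp [xperp, xpar]
  · simp [xperp, xpar, h]

lemma xpar_eq_smul (x : Fin (m + 1) → ℝ) : xpar x = x 0 • Pi.single 0 1 := by
  simpa [xpar] using Pi.single_smul' (0 : Fin (m + 1)) (x 0) (1 : ℝ)

noncomputable def coneHeight (c : (Fin (m + 1) → ℝ) × (Fin m₂ → ℝ)) : Fin m₂ → ℝ :=
  c.2 - (1 / 2 : ℝ) • bvec B (xperp c.1) (xpar c.1)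

lemma mem_posCone_iff (ε α : ℝ) (c : (Fin (m + 1) → ℝ) × (Fin m₂ → ℝ)) :
    c ∈ posCone B ε α ↔
      max (eunorm (xperp c.1)) (ε * √(eunorm (coneHeight B c))) < α * |c.1 0| ∧ 0 < c.1 0 :=
  Iff.rfl

lemma coneHeight_single_gmul (s : ℝ) (r : (Fin (m + 1) → ℝ) × (Fin m₂ → ℝ)) :
    coneHeight B (gmul B (Pi.single 0 s, 0) r)
      = (r.2 - (r.1 0 / 2) • bvec B (xperp r.1) (Pi.single 0 1))
        + s • ((1 / 2 : ℝ) •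
          (bvec B (Pi.single 0 1) r.1 - bvec B (xperp r.1) (Pi.single 0 1))) := by
  have h0 : (Pi.single 0 s + r.1 : Fin (m + 1) → ℝ) 0 = s + r.1 0 := by simp
  have hs : (Pi.single 0 s : Fin (m + 1) → ℝ) = s • Pi.single 0 1 := by
    simpa using Pi.single_smul' (0 : Fin (m + 1)) s (1 : ℝ)
  simp only [coneHeight, gmul, xperp_single_add, xpar_eq_smul, h0, bvec_smul_right, zero_add]
  rw [hs, bvec_smul_left]
  module

lemma eventually_single_gmul_mem_posCone (ε : ℝ) {α : ℝ} (hα : 0 < α)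
    (r : (Fin (m + 1) → ℝ) × (Fin m₂ → ℝ)) :
    ∀ᶠ s in atTop, gmul B (Pi.single 0 s, 0) r ∈ posCone B ε α := by
  set v := r.2 - (r.1 0 / 2) • bvec B (xperp r.1) (Pi.single 0 1)
  set w := (1 / 2 : ℝ) • (bvec B (Pi.single 0 1) r.1 - bvec B (xperp r.1) (Pi.single 0 1))
  filter_upwards [eventually_ge_atTop 0,
    eventually_gt_atTop (eunorm (xperp r.1) / α - r.1 0),
    eventually_mul_sqrt_lt ε (eunorm v) (eunorm w) (r.1 0) hα] with s hs₀ hperp hheight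
  have h0 : (gmul B (Pi.single 0 s, 0) r).1 0 = s + r.1 0 := by simp [gmul]
  have hpos : 0 < s + r.1 0 := by
    have : 0 ≤ eunorm (xperp r.1) / α := div_nonneg (Real.sqrt_nonneg _) hα.le
    linarith
  rw [mem_posCone_iff, h0, abs_of_pos hpos, coneHeight_single_gmul]
  refine ⟨max_lt ?_ (hheight _ ?_), hpos⟩
  · rw [show (gmul B (Pi.single 0 s, 0) r).1 = Pi.single 0 s + r.1 from rfl, xperp_single_add]
    have := (div_lt_iff₀ hα).1 (show eunorm (xperp r.1) / α < s + r.1 0 by linarith)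
    linarith
  · simpa only [abs_of_nonneg hs₀] using eunorm_add_smul_le v w s

end Cone

theorem stmt_13_general (m m₂ : ℕ) (B : Fin m₂ → Matrix (Fin (m + 1)) (Fin (m + 1)) ℝ)
    (hB : ∀ j, (B j)ᵀ = -B j) (ε₂ : ℝ)
    (α : ℝ) (hα : 0 < α) (p : (Fin (m + 1) → ℝ) × (Fin m₂ → ℝ)) (s₀ : ℝ) :
    (⋃ s ∈ Set.Iio s₀,
        (fun c => gmul B (gmul B p (Pi.single (0 : Fin (m + 1)) s, 0)) c) ''
          posCone B ε₂ α)
      = Set.univ := by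
  refine Set.eq_univ_of_forall fun q => ?_
  obtain ⟨r, rfl⟩ := exists_gmul_eq B p q
  obtain ⟨s, hs_mem, hs_lt⟩ := ((tendsto_neg_atBot_atTop.eventually
    (eventually_single_gmul_mem_posCone B ε₂ hα r)).and (eventually_lt_atBot s₀)).exists
  refine Set.mem_iUnion₂.2 ⟨s, hs_lt, _, hs_mem, ?_⟩
  dsimp only
  rw [gmul_assoc, ← gmul_assoc B (Pi.single 0 s, 0), Pi.single_neg, gmul_neg_self B hB,
    gmul_zero_left]

/-- For every `α > 0`, `p ∈ 𝔾` and `s₀ ∈ ℝ`, the union over `s < s₀` of the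
positive cones `C⁺(p ⋆ se₁, α)` is all of `𝔾`. -/
theorem stmt_13 (m m₂ : ℕ) (B : Fin m₂ → Matrix (Fin (m + 1)) (Fin (m + 1)) ℝ)
    (hB : ∀ j, (B j)ᵀ = -B j) (ε₂ : ℝ) (hε₂ : 0 < ε₂)
    (α : ℝ) (hα : 0 < α) (p : (Fin (m + 1) → ℝ) × (Fin m₂ → ℝ)) (s₀ : ℝ) :
    (⋃ s ∈ Set.Iio s₀,
        (fun c => gmul B (gmul B p (Pi.single (0 : Fin (m + 1)) s, 0)) c) ''
          posCone B ε₂ α)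
      = Set.univ :=
  stmt_13_general m m₂ B hB ε₂ α hα p s₀
end

section
/- For every α > 0, the negative cone satisfies C⁻(0,α) ⊂ ι(C⁺(0, α + ε₂√(αC))), where ι(p) = p⁻¹ = −p and C is the constant with |⟨Bx,ξ⟩| ≤ C|x||ξ|. -/
open Matrix

/-- The negative open cone `C⁻(0,α)`: same condition with `x₁ < 0`. -/
noncomputable def negCone {m m₂ : ℕ}
    (B : Fin m₂ → Matrix (Fin (m + 1)) (Fin (m + 1)) ℝ) (ε₂ α : ℝ) :
    Set ((Fin (m + 1) → ℝ) × (Fin m₂ → ℝ)) :=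
  {p | max (eunorm (xperp p.1))
        (ε₂ * Real.sqrt (eunorm (p.2 - (1 / 2 : ℝ) • bvec B (xperp p.1) (xpar p.1))))
      < α * |p.1 0| ∧ p.1 0 < 0}

/-!
Inversion `p ↦ -p` flips `x₁` and `x^⊥` but fixes the quadratic term `b = ⟨Bx^⊥,x^∥⟩`, so the
vertical defect `t - ½b` of `p` becomes, up to sign, `t + ½b = (t - ½b) + b` for `-p`. The extra
term is controlled by `|b| ≤ C|x^⊥||x₁| < αC|x₁|²`, and subadditivity of `√` turns this into the
extra aperture `ε₂√(αC)`.
-/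

lemma eunorm_eq_norm_toLp {n : ℕ} (x : Fin n → ℝ) : eunorm x = ‖WithLp.toLp 2 x‖ := by
  simp [EuclideanSpace.norm_eq, eunorm, sq_abs]

lemma eunorm_nonneg {n : ℕ} (x : Fin n → ℝ) : 0 ≤ eunorm x := Real.sqrt_nonneg _

lemma eunorm_neg {n : ℕ} (x : Fin n → ℝ) : eunorm (-x) = eunorm x := by
  simp [eunorm]

lemma eunorm_add_le {n : ℕ} (x y : Fin n → ℝ) : eunorm (x + y) ≤ eunorm x + eunorm y := by
  simpa only [eunorm_eq_norm_toLp, WithLp.toLp_add] using norm_add_le _ _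

lemma eunorm_xpar {m : ℕ} (x : Fin (m + 1) → ℝ) : eunorm (xpar x) = |x 0| := by
  rw [eunorm, xpar, Finset.sum_eq_single 0 (fun i _ hi => by simp [hi]) (by simp),
    Pi.single_eq_same, Real.sqrt_sq_eq_abs]

lemma xpar_neg {m : ℕ} (x : Fin (m + 1) → ℝ) : xpar (-x) = -xpar x := by
  simp [xpar, Pi.single_neg]

lemma xperp_neg {m : ℕ} (x : Fin (m + 1) → ℝ) : xperp (-x) = -xperp x := by
  simp only [xperp, xpar_neg]
  abel

lemma bvec_neg_neg {m₁ m₂ : ℕ} (B : Fin m₂ → Matrix (Fin m₁) (Fin m₁) ℝ) (x ξ : Fin m₁ → ℝ) :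
    bvec B (-x) (-ξ) = bvec B x ξ := by
  funext j
  simp [bvec, Matrix.mulVec_neg]

lemma Real.sqrt_add_le_add_sqrt {a b : ℝ} (ha : 0 ≤ a) (hb : 0 ≤ b) :
    Real.sqrt (a + b) ≤ Real.sqrt a + Real.sqrt b := by
  rw [Real.sqrt_le_iff]
  refine ⟨by positivity, ?_⟩
  nlinarith [Real.sq_sqrt ha, Real.sq_sqrt hb, Real.sqrt_nonneg a, Real.sqrt_nonneg b]

lemma neg_mem_posCone_iff {m m₂ : ℕ} (B : Fin m₂ → Matrix (Fin (m + 1)) (Fin (m + 1)) ℝ)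
    (ε₂ β : ℝ) (p : (Fin (m + 1) → ℝ) × (Fin m₂ → ℝ)) :
    -p ∈ posCone B ε₂ β ↔
      max (eunorm (xperp p.1))
          (ε₂ * Real.sqrt (eunorm (p.2 + (1 / 2 : ℝ) • bvec B (xperp p.1) (xpar p.1))))
        < β * |p.1 0| ∧ p.1 0 < 0 := by
  have hvert : -p.2 - (1 / 2 : ℝ) • bvec B (xperp p.1) (xpar p.1)
      = -(p.2 + (1 / 2 : ℝ) • bvec B (xperp p.1) (xpar p.1)) := by abel
  simp only [posCone, Set.mem_ofPred_eq, Prod.fst_neg, Prod.snd_neg, Pi.neg_apply, xperp_neg,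
    xpar_neg, bvec_neg_neg, eunorm_neg, hvert, abs_neg, neg_pos]

theorem stmt_14_general (m m₂ : ℕ) (B : Fin m₂ → Matrix (Fin (m + 1)) (Fin (m + 1)) ℝ)
    (ε₂ : ℝ) (hε₂ : 0 < ε₂)
    (C : ℝ) (hC : 0 < C)
    (hCB : ∀ x ξ : Fin (m + 1) → ℝ, eunorm (bvec B x ξ) ≤ C * eunorm x * eunorm ξ)
    (α : ℝ) :
    negCone B ε₂ α ⊆ Neg.neg ⁻¹' posCone B ε₂ (α + ε₂ * Real.sqrt (α * C)) := by
  rintro ⟨x, t⟩ ⟨hcone, hx0⟩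
  obtain ⟨hperp, hvert⟩ := max_lt_iff.1 hcone
  set b := bvec B (xperp x) (xpar x)
  have hb : Real.sqrt (eunorm b) ≤ Real.sqrt (α * C) * |x 0| := by
    rw [← Real.sqrt_sq (abs_nonneg (x 0)), ← Real.sqrt_mul' _ (sq_nonneg _)]
    refine Real.sqrt_le_sqrt ((hCB _ _).trans ?_)
    rw [eunorm_xpar]
    nlinarith [abs_nonneg (x 0), mul_le_mul_of_nonneg_left hperp.le hC.le]
  have ht : Real.sqrt (eunorm (t + (1 / 2 : ℝ) • b))
      ≤ Real.sqrt (eunorm (t - (1 / 2 : ℝ) • b)) + Real.sqrt (eunorm b) := by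
    have hsplit : t + (1 / 2 : ℝ) • b = (t - (1 / 2 : ℝ) • b) + b := by module
    rw [hsplit]
    exact (Real.sqrt_le_sqrt (eunorm_add_le _ _)).trans
      (Real.sqrt_add_le_add_sqrt (eunorm_nonneg _) (eunorm_nonneg _))
  have hextra_nonneg : 0 ≤ ε₂ * Real.sqrt (α * C) * |x 0| := by positivity
  refine (neg_mem_posCone_iff B ε₂ _ (x, t)).2 ⟨max_lt_iff.2 ⟨by nlinarith, ?_⟩, hx0⟩
  nlinarith [mul_le_mul_of_nonneg_left (ht.trans (add_le_add_right hb _)) hε₂.le]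

/-- For every `α > 0`, the negative cone satisfies
`C⁻(0,α) ⊂ ι(C⁺(0, α + ε₂√(αC)))`, where `ι(p) = p⁻¹ = -p` and `C` is the
constant with `|⟨Bx,ξ⟩| ≤ C|x||ξ|`. -/
theorem stmt_14 (m m₂ : ℕ) (B : Fin m₂ → Matrix (Fin (m + 1)) (Fin (m + 1)) ℝ)
    (hB : ∀ j, (B j)ᵀ = -B j) (ε₂ : ℝ) (hε₂ : 0 < ε₂)
    (C : ℝ) (hC : 0 < C)
    (hCB : ∀ x ξ : Fin (m + 1) → ℝ, eunorm (bvec B x ξ) ≤ C * eunorm x * eunorm ξ)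
    (α : ℝ) (hα : 0 < α) :
    negCone B ε₂ α ⊆ Neg.neg ⁻¹' posCone B ε₂ (α + ε₂ * Real.sqrt (α * C)) :=
  stmt_14_general m m₂ B ε₂ hε₂ C hC hCB α
end
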